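/- (Infinitary Splitting Lemma) Let F be an infinitary propositional formula over σ and let P_1, P_2 be disjoint sets of atoms such that the partition {P_1, P_2} is infinitely separable on the dependency graph DG_{P_1 ∪ P_2}[F]. Then an interpretation I is a (P_1 ∪ P_2)-stable model of F if and only if it is both a P_1-stable model and a P_2-stable model of F. -/

import Mathlib

/-- Infinitary propositional formulas over signature `σ`:
atoms, conjunctions and disjunctions of (index-)sets of formulas, implication. -/
inductive Formula (σ : Type) : Type 1
  | atom : σ → Formula σ
  | conj : (ι : Type) → (ι → Formula σ) → Formula σ
  | disj : (ι : Type) → (ι → Formula σ) → Formula σ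
  | imp : Formula σ → Formula σ → Formula σ

namespace Formula

variable {σ : Type}

/-- `⊥` is the empty disjunction. -/
def bot : Formula σ := Formula.disj Empty (fun e => e.elim)

/-- Binary conjunction `F ∧ G`. -/
def and (F G : Formula σ) : Formula σ := Formula.conj Bool (fun b => if b then F else G)

/-- Binary disjunction `F ∨ G`. -/
def or (F G : Formula σ) : Formula σ := Formula.disj Bool (fun b => if b then F else G)

/-- Negation `¬F` abbreviates `F → ⊥`. -/
def neg (F : Formula σ) : Formula σ := Formula.imp F bot

/-- Conjunction of a set of atoms. -/
def conjAtoms (S : Set σ) : Formula σ := Formula.conj S (fun p => Formula.atom p.val)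

/-- Satisfaction of an infinitary formula by an interpretation `I ⊆ σ`. -/
def Sat (I : Set σ) : Formula σ → Prop
  | .atom p => p ∈ I
  | .conj _ f => ∀ i, Sat I (f i)
  | .disj _ f => ∃ i, Sat I (f i)
  | .imp F G => Sat I F → Sat I G

open Classical in
/-- The reduct `F^I`. -/
noncomputable def reduct (I : Set σ) : Formula σ → Formula σ
  | .atom p => if p ∈ I then Formula.atom p else bot
  | .conj ι f => Formula.conj ι (fun i => reduct I (f i))
  | .disj ι f => Formula.disj ι (fun i => reduct I (f i))
  | .imp F G => if Sat I (Formula.imp F G) then Formula.imp (reduct I F) (reduct I G) else bot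

/-- `I` is an `A`-stable model of `F`: `I` is minimal w.r.t. `≤_A`
(`J ≤_A I` iff `J ⊆ I` and `I \ J ⊆ A`) among interpretations satisfying `F^I`. -/
def AStable (A : Set σ) (I : Set σ) (F : Formula σ) : Prop :=
  Sat I (reduct I F) ∧ ∀ J : Set σ, J ⊆ I → I \ J ⊆ A → Sat J (reduct I F) → J = I

/-- A stable model is a `σ`-stable model. -/
def Stable (I : Set σ) (F : Formula σ) : Prop := AStable Set.univ I F

/-- The strictly positive atoms `P(F)`. -/
def spos : Formula σ → Set σ
  | .atom p => {p}
  | .conj _ f => ⋃ i, spos (f i)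
  | .disj _ f => ⋃ i, spos (f i)
  | .imp _ H => spos H

/-- `F` is (syntactically) the formula `⊥`, i.e. an empty disjunction. -/
def IsBot : Formula σ → Prop
  | .disj ι _ => IsEmpty ι
  | _ => False

open Classical in
mutual
/-- Positive nonnegated atoms `Pnn(F)`. -/
noncomputable def pnn : Formula σ → Set σ
  | .atom p => {p}
  | .conj _ f => ⋃ i, pnn (f i)
  | .disj _ f => ⋃ i, pnn (f i)
  | .imp G H => if IsBot H then ∅ else nnn G ∪ pnn H

/-- Negative nonnegated atoms `Nnn(F)`. -/
noncomputable def nnn : Formula σ → Set σ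
  | .atom _ => ∅
  | .conj _ f => ⋃ i, nnn (f i)
  | .disj _ f => ⋃ i, nnn (f i)
  | .imp G H => if IsBot H then ∅ else pnn G ∪ nnn H
end

/-- The rules of a formula, as antecedent/consequent pairs. -/
def rules : Formula σ → Set (Formula σ × Formula σ)
  | .atom _ => ∅
  | .conj _ f => ⋃ i, rules (f i)
  | .disj _ f => ⋃ i, rules (f i)
  | .imp G H => insert (G, H) (rules H)

/-- Edge relation of the positive dependency graph `DG_A[F]` (vertex set `A`). -/
noncomputable def DGEdge (F : Formula σ) (A : Set σ) (p q : σ) : Prop :=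
  p ∈ A ∧ q ∈ A ∧ ∃ R ∈ rules F, p ∈ spos R.2 ∧ q ∈ pnn R.1

/-- The atoms occurring in a formula. -/
def atoms : Formula σ → Set σ
  | .atom p => {p}
  | .conj _ f => ⋃ i, atoms (f i)
  | .disj _ f => ⋃ i, atoms (f i)
  | .imp G H => atoms G ∪ atoms H

/-- `G` is a definition for the set `Q` of atoms: a conjunction of formulas
`H ∧ C^∧ → q` with `q ∈ Q`, `C ⊆ Q`, and no atom of `Q` occurring in `H`. -/
def IsDefinition (Q : Set σ) (G : Formula σ) : Prop :=
  ∃ (ι : Type) (g : ι → Formula σ), G = Formula.conj ι g ∧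
    ∀ i, ∃ (H : Formula σ) (C : Set σ) (q : σ),
      q ∈ Q ∧ C ⊆ Q ∧ (∀ p ∈ Q, p ∉ atoms H) ∧
      g i = Formula.imp (Formula.and H (conjAtoms C)) (Formula.atom q)

end Formula

section Graph

variable {V : Type*}

/-- An infinite walk in the directed graph with edge relation `E`. -/
def IsInfWalk (E : V → V → Prop) (w : ℕ → V) : Prop := ∀ i, E (w i) (w (i + 1))

/-- The partition `{P₁, P₂}` is infinitely separable: every infinite walk
visits `P₁` or `P₂` only finitely often. -/
def InfSeparable (E : V → V → Prop) (P1 P2 : Set V) : Prop :=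
  ∀ w : ℕ → V, IsInfWalk E w → {i | w i ∈ P1}.Finite ∨ {i | w i ∈ P2}.Finite

/-- `u` and `v` are in the same strongly connected component:
each is reachable from the other. -/
def SameSCC (E : V → V → Prop) (u v : V) : Prop :=
  Relation.ReflTransGen E u v ∧ Relation.ReflTransGen E v u

/-- The partition `{P₁, P₂}` is separable: every strongly connected
component is contained in `P₁` or in `P₂`. -/
def Separable (E : V → V → Prop) (P1 P2 : Set V) : Prop :=
  ∀ u v, SameSCC E u v → ((u ∈ P1 ∧ v ∈ P1) ∨ (u ∈ P2 ∧ v ∈ P2))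

end Graph

/-!
Suppose `J ≤_{P₁ ∪ P₂} I`, `J ≠ I` and `J ⊨ F^I`. The nonempty difference `D = I \ J` contains a
nonempty set `U` that is closed under dependency edges inside `D` and lies in `P₁` or in `P₂`:
otherwise every atom of `D` reaches, inside `D`, an atom outside its own part, and chaining these
paths gives an infinite walk visiting both parts infinitely often. Since no rule whose head meets
`U` has a positive nonnegated body atom in `D \ U`, removing `U` from `I` preserves `F^I`, which
contradicts `P₁`- or `P₂`-minimality of `I`.
-/

section Graph

variable {V : Type*} {E : V → V → Prop}

theorem Relation.TransGen.exists_path {a b : V} (h : Relation.TransGen E a b) :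
    ∃ (n : ℕ) (p : ℕ → V), p 0 = a ∧ p (n + 1) = b ∧ ∀ i ≤ n, E (p i) (p (i + 1)) := by
  induction h using Relation.TransGen.head_induction_on with
  | @single c hcb => exact ⟨0, fun i => if i = 0 then c else b, rfl, rfl, by simpa using hcb⟩
  | @head c _ hac _ ih =>
    obtain ⟨n, p, hp0, hpn, hp⟩ := ih
    refine ⟨n + 1, fun | 0 => c | i + 1 => p i, rfl, hpn, ?_⟩
    rintro (_ | i) hi
    · simpa [hp0] using hac
    · exact hp i (by omega)

theorem exists_isInfWalk_of_transGen {f : ℕ → V} (hf : IsInfWalk (Relation.TransGen E) f) :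
    ∃ w : ℕ → V, IsInfWalk E w ∧ ∀ k, ∃ m ≥ k, w m = f k := by
  choose len p hp0 hplast hpE using fun k => (hf k).exists_path
  -- the state `(k, j)` stands for the `j`-th vertex of the `k`-th path
  let next : ℕ × ℕ → ℕ × ℕ := fun s => if s.2 < len s.1 then (s.1, s.2 + 1) else (s.1 + 1, 0)
  let s : ℕ → ℕ × ℕ := fun m => next^[m] (0, 0)
  have hs_succ (m : ℕ) : s (m + 1) = next (s m) := Function.iterate_succ_apply' next m (0, 0)
  have hs_le (m : ℕ) : (s m).2 ≤ len (s m).1 := by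
    induction m with
    | zero => exact Nat.zero_le _
    | succ m ih =>
      rw [hs_succ]
      simp only [next]
      split_ifs with h
      exacts [h, Nat.zero_le _]
  have hs_run (m k : ℕ) (hm : s m = (k, 0)) : ∀ j ≤ len k, s (m + j) = (k, j) := by
    intro j hj
    induction j with
    | zero => exact hm
    | succ j ih =>
      rw [← add_assoc, hs_succ, ih (by omega)]
      simp only [next, if_pos (show j < len k by omega)]
  have hs_start (k : ℕ) : ∃ m ≥ k, s m = (k, 0) := by
    induction k with
    | zero => exact ⟨0, le_rfl, rfl⟩
    | succ k ih =>
      obtain ⟨m, hmk, hm⟩ := ih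
      refine ⟨m + len k + 1, by omega, ?_⟩
      rw [hs_succ, hs_run m k hm (len k) le_rfl]
      simp only [next, lt_irrefl, if_false]
  refine ⟨fun m => p (s m).1 (s m).2, fun m => ?_, fun k => ?_⟩
  · show E (p (s m).1 (s m).2) (p (s (m + 1)).1 (s (m + 1)).2)
    rw [hs_succ]
    simp only [next]
    split_ifs with h
    · exact hpE _ _ h.le
    · rw [hp0, ← hplast, ← le_antisymm (hs_le m) (not_lt.1 h)]
      exact hpE _ _ (hs_le m)
  · obtain ⟨m, hmk, hm⟩ := hs_start k
    exact ⟨m, hmk, by simp only [hm, hp0]⟩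

theorem InfSeparable.transGen {P1 P2 : Set V} (hsep : InfSeparable E P1 P2) :
    InfSeparable (Relation.TransGen E) P1 P2 := by
  intro f hf
  obtain ⟨w, hw, hwf⟩ := exists_isInfWalk_of_transGen hf
  have visits {P : Set V} (hP : {k | f k ∈ P}.Infinite) : {i | w i ∈ P}.Infinite :=
    Set.infinite_of_forall_exists_gt fun b => by
      obtain ⟨k, hk, hbk⟩ := hP.exists_gt b
      obtain ⟨m, hmk, hm⟩ := hwf k
      exact ⟨m, show w m ∈ P from hm ▸ hk, by omega⟩
  rcases hsep w hw with h | h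
  · exact .inl (Set.not_infinite.1 fun hinf => visits hinf h)
  · exact .inr (Set.not_infinite.1 fun hinf => visits hinf h)

theorem exists_closed_subset_of_infSeparable {P1 P2 D : Set V} (hsep : InfSeparable E P1 P2)
    (hD : D ⊆ P1 ∪ P2) (hne : D.Nonempty) :
    ∃ U ⊆ D, U.Nonempty ∧ (∀ p ∈ U, ∀ q ∈ D, E p q → q ∈ U) ∧ (U ⊆ P1 ∨ U ⊆ P2) := by
  let E' : V → V → Prop := fun p q => E p q ∧ q ∈ D
  let reach : V → Set V := fun v => {q | Relation.ReflTransGen E' v q}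
  have reach_subset {v : V} (hv : v ∈ D) : reach v ⊆ D := fun q hq => by
    rcases hq.cases_tail with rfl | ⟨_, _, _, hq⟩
    exacts [hv, hq]
  by_cases hmono : ∃ v ∈ D, reach v ⊆ P1 ∨ reach v ⊆ P2
  · obtain ⟨v, hv, hvP⟩ := hmono
    exact ⟨reach v, reach_subset hv, ⟨v, .refl⟩, fun p hp q hq hpq => hp.tail ⟨hpq, hq⟩, hvP⟩
  push Not at hmono
  have leave {v : V} {P : Set V} (hv : v ∈ D) (hvP : v ∈ P) (h : ¬ reach v ⊆ P) :
      ∃ t ∈ D, Relation.TransGen E v t ∧ t ∉ P := by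
    obtain ⟨q, hq, hqP⟩ := Set.not_subset.1 h
    refine ⟨q, reach_subset hv hq, ?_, hqP⟩
    obtain rfl | ⟨c, hvc, hcq⟩ := hq.cases_head
    · exact absurd hvP hqP
    · exact Relation.TransGen.mono (fun _ _ h => h.1) _ _ (Relation.TransGen.head' hvc hcq)
  have hstep (v : D) : ∃ t : D, Relation.TransGen E v t ∧ (t.1 ∈ P1 ↔ v.1 ∉ P1) := by
    by_cases hv1 : v.1 ∈ P1
    · obtain ⟨t, htD, hvt, ht⟩ := leave v.2 hv1 (hmono v v.2).1
      exact ⟨⟨t, htD⟩, hvt, iff_of_false ht (not_not.2 hv1)⟩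
    · obtain ⟨t, htD, hvt, ht⟩ := leave v.2 ((hD v.2).resolve_left hv1) (hmono v v.2).2
      exact ⟨⟨t, htD⟩, hvt, iff_of_true ((hD htD).resolve_right ht) hv1⟩
  choose t ht using hstep
  obtain ⟨v₀, hv₀⟩ := hne
  let g : ℕ → D := fun k => t^[k] ⟨v₀, hv₀⟩
  have hg (k : ℕ) : g (k + 1) = t (g k) := Function.iterate_succ_apply' t k _
  have halt (k : ℕ) : (g (k + 1)).1 ∈ P1 ↔ (g k).1 ∉ P1 := hg k ▸ (ht _).2
  have often {P : Set V} (hP : ∀ k, (g k).1 ∈ P ∨ (g (k + 1)).1 ∈ P) :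
      {k | (g k).1 ∈ P}.Infinite :=
    Set.infinite_of_forall_exists_gt fun b =>
      (hP (b + 1)).elim (⟨b + 1, ·, by omega⟩) (⟨b + 2, ·, by omega⟩)
  exfalso
  refine (hsep.transGen _ fun k => hg k ▸ (ht _).1).elim (often fun k => ?_) (often fun k => ?_)
  · exact (em _).imp_right (halt k).2
  · by_cases hk : (g k).1 ∈ P1
    · exact .inr ((hD (g (k + 1)).2).resolve_left fun h => (halt k).1 h hk)
    · exact .inl ((hD (g k).2).resolve_left hk)

end Graph

namespace Formula

variable {σ : Type} {I J K : Set σ}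

theorem not_sat_bot : ¬ Sat J (bot : Formula σ) := fun ⟨e, _⟩ => e.elim

theorem IsBot.not_sat {H : Formula σ} (hH : H.IsBot) : ¬ Sat J H := by
  cases H with
  | disj ι f => exact fun ⟨i, _⟩ => (hH : IsEmpty ι).elim i
  | _ => exact hH.elim

@[simp]
theorem sat_reduct_atom {p : σ} : Sat J (reduct I (atom p)) ↔ p ∈ I ∧ p ∈ J := by
  rw [reduct]
  split_ifs with hp
  · exact (and_iff_right hp).symm
  · exact iff_of_false not_sat_bot fun h => hp h.1

@[simp]
theorem sat_reduct_imp {G H : Formula σ} :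
    Sat J (reduct I (imp G H)) ↔ Sat I (imp G H) ∧ (Sat J (reduct I G) → Sat J (reduct I H)) := by
  rw [reduct]
  split_ifs with hI
  · exact (and_iff_right hI).symm
  · exact iff_of_false not_sat_bot fun h => hI h.1

theorem sat_of_sat_reduct {F : Formula σ} (h : Sat J (reduct I F)) : Sat I F := by
  induction F with
  | atom p => exact (sat_reduct_atom.1 h).1
  | conj ι f ih => exact fun i => ih i (h i)
  | disj ι f ih => exact h.elim fun i hi => ⟨i, ih i hi⟩
  | imp G H => exact (sat_reduct_imp.1 h).1

theorem sat_reduct_of_spos_subset {F : Formula σ} (hF : Sat I F) (hK : spos F ∩ I ⊆ K) :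
    Sat K (reduct I F) := by
  induction F with
  | atom p => exact sat_reduct_atom.2 ⟨hF, hK ⟨rfl, hF⟩⟩
  | conj ι f ih =>
    exact fun i => ih i (hF i) ((Set.inter_subset_inter_left _ (Set.subset_iUnion _ i)).trans hK)
  | disj ι f ih =>
    obtain ⟨i, hi⟩ := hF
    exact ⟨i, ih i hi ((Set.inter_subset_inter_left _ (Set.subset_iUnion _ i)).trans hK)⟩
  | imp G H _ ihH => exact sat_reduct_imp.2 ⟨hF, fun hG => ihH (hF (sat_of_sat_reduct hG)) hK⟩

theorem sat_reduct_antitone_pnn_monotone_nnn (hJK : J ⊆ K) (G : Formula σ) :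
    (pnn G ∩ K ⊆ J → Sat K (reduct I G) → Sat J (reduct I G)) ∧
      (nnn G ∩ K ⊆ J → Sat J (reduct I G) → Sat K (reduct I G)) := by
  induction G with
  | atom p =>
    simp only [pnn, nnn, sat_reduct_atom]
    exact ⟨fun h hp => ⟨hp.1, h ⟨rfl, hp.2⟩⟩, fun _ hp => ⟨hp.1, hJK hp.2⟩⟩
  | conj ι f ih =>
    simp only [pnn, nnn, Set.iUnion_inter, Set.iUnion_subset_iff]
    exact ⟨fun h hK i => (ih i).1 (h i) (hK i), fun h hJ i => (ih i).2 (h i) (hJ i)⟩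
  | disj ι f ih =>
    simp only [pnn, nnn, Set.iUnion_inter, Set.iUnion_subset_iff]
    exact ⟨fun h ⟨i, hi⟩ => ⟨i, (ih i).1 (h i) hi⟩, fun h ⟨i, hi⟩ => ⟨i, (ih i).2 (h i) hi⟩⟩
  | imp G H ihG ihH =>
    by_cases hb : H.IsBot
    · have hneg (X : Set σ) : Sat X (reduct I (imp G H)) ↔ Sat I (imp G H) :=
        ⟨fun h => (sat_reduct_imp.1 h).1,
          fun h => sat_reduct_imp.2 ⟨h, fun hG => (hb.not_sat (h (sat_of_sat_reduct hG))).elim⟩⟩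
      simp only [hneg]
      exact ⟨fun _ => id, fun _ => id⟩
    · simp only [pnn, nnn, if_neg hb, Set.union_inter_distrib_right, Set.union_subset_iff,
        sat_reduct_imp]
      exact ⟨fun ⟨hG, hH⟩ ⟨hI, h⟩ => ⟨hI, fun hJG => ihH.1 hH (h (ihG.2 hG hJG))⟩,
        fun ⟨hG, hH⟩ ⟨hI, h⟩ => ⟨hI, fun hKG => ihH.2 hH (h (ihG.1 hG hKG))⟩⟩

theorem sat_reduct_of_rules {F : Formula σ} (hJK : J ⊆ K)
    (hrules : ∀ R ∈ rules F, (spos R.2 ∩ (I \ K)).Nonempty → pnn R.1 ∩ K ⊆ J)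
    (hJ : Sat J (reduct I F)) : Sat K (reduct I F) := by
  induction F with
  | atom p => exact sat_reduct_atom.2 ⟨(sat_reduct_atom.1 hJ).1, hJK (sat_reduct_atom.1 hJ).2⟩
  | conj ι f ih => exact fun i => ih i (fun R hR => hrules R (Set.mem_iUnion_of_mem i hR)) (hJ i)
  | disj ι f ih =>
    obtain ⟨i, hi⟩ := hJ
    exact ⟨i, ih i (fun R hR => hrules R (Set.mem_iUnion_of_mem i hR)) hi⟩
  | imp G H _ ihH =>
    obtain ⟨hI, himp⟩ := sat_reduct_imp.1 hJ
    refine sat_reduct_imp.2 ⟨hI, fun hKG => ?_⟩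
    by_cases hHK : (spos H ∩ (I \ K)).Nonempty
    · have hJG := (sat_reduct_antitone_pnn_monotone_nnn hJK G).1
        (hrules (G, H) (Set.mem_insert _ _) hHK) hKG
      exact ihH (fun R hR => hrules R (Set.mem_insert_of_mem _ hR)) (himp hJG)
    · exact sat_reduct_of_spos_subset (hI (sat_of_sat_reduct hKG))
        fun p hp => by_contra fun hpK => hHK ⟨p, hp.1, hp.2, hpK⟩

theorem sat_reduct_diff_of_closed {F : Formula σ} {A U : Set σ} (hJI : J ⊆ I) (hU : U ⊆ I \ J)
    (hA : I \ J ⊆ A) (hclosed : ∀ p ∈ U, ∀ q ∈ I \ J, DGEdge F A p q → q ∈ U)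
    (hJ : Sat J (reduct I F)) : Sat (I \ U) (reduct I F) := by
  refine sat_reduct_of_rules (fun q hq => ⟨hJI hq, fun hqU => (hU hqU).2 hq⟩) ?_ hJ
  rintro ⟨G, H⟩ hR ⟨p, hpH, hpI, hpU⟩ q ⟨hqG, hqI, hqU⟩
  by_contra hqJ
  have hpU : p ∈ U := not_not.1 fun h => hpU ⟨hpI, h⟩
  exact hqU (hclosed p hpU q ⟨hqI, hqJ⟩ ⟨hA (hU hpU), hA ⟨hqI, hqJ⟩, _, hR, hpH, hqG⟩)

variable {A B : Set σ} {F : Formula σ}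

theorem AStable.anti (hAB : A ⊆ B) (h : AStable B I F) : AStable A I F :=
  ⟨h.1, fun J hJI hIJ hJ => h.2 J hJI (hIJ.trans hAB) hJ⟩

theorem AStable.eq_empty_of_sat_reduct_diff {U : Set σ} (h : AStable A I F) (hUI : U ⊆ I)
    (hUA : U ⊆ A) (hsat : Sat (I \ U) (reduct I F)) : U = ∅ := by
  have hIU : I \ U = I := h.2 _ Set.sdiff_subset (by rwa [Set.sdiff_sdiff_cancel_left hUI]) hsat
  exact Set.eq_empty_of_forall_notMem fun p hp => (hIU.symm ▸ hUI hp : p ∈ I \ U).2 hp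

end Formula

/-- Infinitary Splitting Lemma: if `{P₁, P₂}` is infinitely
separable on `DG_{P₁∪P₂}[F]`, then `I` is a `(P₁ ∪ P₂)`-stable model of `F`
iff it is both a `P₁`-stable and a `P₂`-stable model of `F`. -/
theorem infinitary_splitting_lemma {σ : Type} (F : Formula σ) (P1 P2 : Set σ)
    (hdisj : Disjoint P1 P2)
    (hsep : InfSeparable (Formula.DGEdge F (P1 ∪ P2)) P1 P2) (I : Set σ) :
    Formula.AStable (P1 ∪ P2) I F ↔
      Formula.AStable P1 I F ∧ Formula.AStable P2 I F := by
  refine ⟨fun h => ⟨h.anti Set.subset_union_left, h.anti Set.subset_union_right⟩, ?_⟩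
  rintro ⟨h1, h2⟩
  refine ⟨h1.1, fun J hJI hA hJ => ?_⟩
  by_contra hJne
  have hD : (I \ J).Nonempty := Set.sdiff_nonempty.2 fun hIJ => hJne (hJI.antisymm hIJ)
  obtain ⟨U, hUD, hUne, hclosed, hU⟩ := exists_closed_subset_of_infSeparable hsep hA hD
  have hsat := Formula.sat_reduct_diff_of_closed hJI hUD hA hclosed hJ
  have hUI : U ⊆ I := hUD.trans Set.sdiff_subset
  exact hUne.ne_empty (hU.elim (h1.eq_empty_of_sat_reduct_diff hUI · hsat)
    (h2.eq_empty_of_sat_reduct_diff hUI · hsat))
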